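/- Let h : {0,1}* → {0,1,2,3}* be the morphism with h(0) = 2301 and h(1) = 301, and let x be any aperiodic infinite binary word. Then the infinite word h(x) over {0,1,2,3} has exactly 5 palindromic factors: the empty word, 0, 1, 2, and 3 (i.e., no palindromic factor of length ≥ 2). -/

import Mathlib

def IsFactor {α : Type*} (y x : List α) : Prop := ∃ u v, x = u ++ y ++ v

/-- The morphism `h(0) = 2301`, `h(1) = 301`. -/
def h : Fin 2 → List (Fin 4) := fun b => if b = 0 then [2, 3, 0, 1] else [3, 0, 1]

/-- The prefix of `h(x)` obtained from the first `n` letters of `x`. -/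
def Hpre (x : ℕ → Fin 2) (n : ℕ) : List (Fin 4) :=
  (List.range n).flatMap (fun i => h (x i))

/-! Every factor of length two of `h(x)` is an edge of the digraph `2 → 3 → 0 → 1 → 2`, `1 → 3`:
each block `2301`, `301` is a path in it, ends in `1`, and the next block starts with `2` or `3`.
No two letters are joined in both directions, whereas a palindrome `ab…ba` of length at least two
would need both `a → b` and `b → a`. Conversely, aperiodicity forces some `x i = 0`, and the
block `h 0 = 2301` contains every letter. -/

theorem List.length_le_one_of_isChain_of_reverse_eq {α : Type*} {r : α → α → Prop}
    (hr : ∀ a b, r a b → ¬ r b a) {l : List α} (hc : l.IsChain r) (hl : l.reverse = l) :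
    l.length ≤ 1 := by
  match l, hc, hl with
  | [], _, _ | [_], _, _ => simp
  | a :: b :: t, hc, hl =>
    have hab : r a b := (List.isChain_cons_cons.mp hc).1
    have hrev : (a :: b :: t).IsChain (fun x y => r y x) := by
      rw [← List.isChain_reverse, hl]; exact hc
    exact absurd (List.isChain_cons_cons.mp hrev).1 (hr a b hab)

theorem List.isChain_flatMap {α β : Type*} {r : α → α → Prop} {f : β → List α}
    (hne : ∀ b, f b ≠ []) (hf : ∀ b, (f b).IsChain r)
    (hlink : ∀ b c, ∀ x ∈ (f b).getLast?, ∀ y ∈ (f c).head?, r x y) (l : List β) :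
    (l.flatMap f).IsChain r := by
  rw [List.flatMap_def, List.isChain_flatten (by simpa using fun b _ => (hne b).symm),
    List.isChain_map]
  exact ⟨by simpa using fun b _ => hf b, (List.pairwise_of_forall hlink).isChain⟩

def HAdj (a b : Fin 4) : Prop := b = a + 1 ∨ (a = 1 ∧ b = 3)

instance : DecidableRel HAdj := fun _ _ => inferInstanceAs (Decidable (_ ∨ _))

theorem hAdj_asymm : ∀ a b, HAdj a b → ¬ HAdj b a := by decide

theorem isChain_Hpre (x : ℕ → Fin 2) (n : ℕ) : (Hpre x n).IsChain HAdj := by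
  have hne : ∀ b, h b ≠ [] := by decide
  have hblock : ∀ b, (h b).IsChain HAdj := by decide
  have hlink : ∀ b c, ∀ a ∈ (h b).getLast?, ∀ a' ∈ (h c).head?, HAdj a a' := by decide
  exact List.isChain_flatMap (fun i => hne (x i)) (fun i => hblock (x i))
    (fun i j => hlink (x i) (x j)) _

theorem isFactor_iff_isInfix {α : Type*} {y x : List α} : IsFactor y x ↔ y <:+: x := by
  simp only [IsFactor, List.IsInfix, eq_comm]

theorem exists_eq_zero_of_aperiodic {x : ℕ → Fin 2}
    (hx : ¬ ∃ p, 1 ≤ p ∧ ∃ N, ∀ m, N ≤ m → x (m + p) = x m) : ∃ i, x i = 0 := by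
  by_contra! hx1
  have hone (i : ℕ) : x i = 1 := Fin.eq_one_of_ne_zero _ (hx1 i)
  exact hx ⟨1, le_rfl, 0, fun m _ => by rw [hone, hone]⟩

theorem isFactor_Hpre_succ_of_mem {x : ℕ → Fin 2} {i : ℕ} {c : Fin 4} (hc : c ∈ h (x i)) :
    IsFactor [c] (Hpre x (i + 1)) := by
  obtain ⟨s, t, hst⟩ := List.append_of_mem hc
  exact ⟨Hpre x i ++ s, t, by simp [Hpre, List.range_succ, hst]⟩

/-- If `x` is an aperiodic infinite binary word, then the infinite word `h(x)` over
`{0,1,2,3}` has exactly 5 palindromic factors: `ε, 0, 1, 2, 3`. -/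
theorem image_word_five_palindromes (x : ℕ → Fin 2)
    (hx : ¬ ∃ p, 1 ≤ p ∧ ∃ N, ∀ m, N ≤ m → x (m + p) = x m) :
    {u : List (Fin 4) | (∃ n, IsFactor u (Hpre x n)) ∧ u.reverse = u} =
      {[], [0], [1], [2], [3]} := by
  ext u
  simp only [Set.mem_ofPred_eq, Set.mem_insert_iff, Set.mem_singleton_iff]
  constructor
  · rintro ⟨⟨n, hu⟩, hpal⟩
    have hlen : u.length ≤ 1 := List.length_le_one_of_isChain_of_reverse_eq hAdj_asymm
      ((isChain_Hpre x n).infix (isFactor_iff_isInfix.mp hu)) hpal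
    match u, hlen with
    | [], _ => simp
    | [c], _ => fin_cases c <;> simp
  · obtain ⟨i, hi⟩ := exists_eq_zero_of_aperiodic hx
    have hletter (c : Fin 4) : ∃ n, IsFactor [c] (Hpre x n) :=
      ⟨i + 1, isFactor_Hpre_succ_of_mem (by rw [hi]; fin_cases c <;> decide)⟩
    rintro (rfl | rfl | rfl | rfl | rfl)
    · exact ⟨⟨0, [], [], rfl⟩, rfl⟩
    all_goals exact ⟨hletter _, rfl⟩
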